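/- In every μ-continuous Chomsky algebra the equation μx.(1 + a·x) = μx.(1 + x·a) holds, provided x is not free in a: for every interpretation σ over a μ-continuous Chomsky algebra C and all terms a, t with x ∉ FV(a), σ(μx.(1 + a·x)) = σ(μx.(1 + x·a)). -/

import Mathlib

/-- μ-expressions over a set `X` of variables:
`t ::= x | t + t | t·t | 0 | 1 | μx.t`. -/
inductive MuTerm (X : Type) : Type
  | var : X → MuTerm X
  | zero : MuTerm X
  | one : MuTerm X
  | add : MuTerm X → MuTerm X → MuTerm X
  | mul : MuTerm X → MuTerm X → MuTerm X
  | mu : X → MuTerm X → MuTerm X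

namespace MuTerm

variable {X : Type}

/-- Size of a term (used for termination of substitution). -/
def size : MuTerm X → ℕ
  | var _ => 1
  | zero => 1
  | one => 1
  | add s t => size s + size t + 1
  | mul s t => size s + size t + 1
  | mu _ t => size t + 1

variable [DecidableEq X]

/-- Free variables of a μ-expression. -/
def fv : MuTerm X → Finset X
  | var x => {x}
  | zero => ∅
  | one => ∅
  | add s t => fv s ∪ fv t
  | mul s t => fv s ∪ fv t
  | mu x t => fv t \ {x}

/-- All (free and bound) variables of a μ-expression. -/
def vars : MuTerm X → Finset X
  | var x => {x}
  | zero => ∅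
  | one => ∅
  | add s t => vars s ∪ vars t
  | mul s t => vars s ∪ vars t
  | mu x t => insert x (vars t)

/-- Rename free occurrences of the variable `y` to `z`. -/
def rename (y z : X) : MuTerm X → MuTerm X
  | var x => if x = y then var z else var x
  | zero => zero
  | one => one
  | add s t => add (rename y z s) (rename y z t)
  | mul s t => mul (rename y z s) (rename y z t)
  | mu x t => if x = y then mu x t else mu x (rename y z t)

theorem size_rename (y z : X) : ∀ t : MuTerm X, (rename y z t).size = t.size
  | var x => by simp only [rename]; split <;> rfl
  | zero => rfl
  | one => rfl
  | add s t => by simp [rename, size, size_rename y z s, size_rename y z t]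
  | mul s t => by simp [rename, size, size_rename y z s, size_rename y z t]
  | mu x t => by
      simp only [rename]; split
      · rfl
      · simp [size, size_rename y z t]

variable [Infinite X]

/-- Capture-avoiding substitution `t[x := u]`: substitute `u` for the free
occurrences of `x` in the last argument, renaming bound variables to fresh
ones to avoid capture. -/
noncomputable def subst (x : X) (u : MuTerm X) : MuTerm X → MuTerm X
  | var y => if y = x then u else var y
  | zero => zero
  | one => one
  | add s t => add (subst x u s) (subst x u t)
  | mul s t => mul (subst x u s) (subst x u t)
  | mu y t =>
    if y = x then mu y t
    else
      let z : X := Classical.choose (Infinite.exists_notMem_finset (vars t ∪ fv u ∪ {x}))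
      mu z (subst x u (rename y z t))
  termination_by t => size t
  decreasing_by
    all_goals simp only [size, size_rename]
    all_goals omega

/-- The `n`-th approximant `nx.t`: `0x.t = 0`, `(n+1)x.t = t[x := nx.t]`. -/
noncomputable def napprox : ℕ → X → MuTerm X → MuTerm X
  | 0, _, _ => zero
  | n + 1, x, t => subst x (napprox n x t) t

end MuTerm

/-- Polynomial functions over a semiring `C` in `n` indeterminates: functions
built from constants in `C`, projections, addition, and multiplication. -/
inductive IsPolyFun {C : Type} [Semiring C] : {n : ℕ} → ((Fin n → C) → C) → Prop
  | const {n : ℕ} (c : C) : IsPolyFun fun _ : Fin n → C => c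
  | proj {n : ℕ} (i : Fin n) : IsPolyFun fun v => v i
  | add {n : ℕ} {p q : (Fin n → C) → C} :
      IsPolyFun p → IsPolyFun q → IsPolyFun fun v => p v + q v
  | mul {n : ℕ} {p q : (Fin n → C) → C} :
      IsPolyFun p → IsPolyFun q → IsPolyFun fun v => p v * q v

/-- A Chomsky algebra is an idempotent semiring (ordered by `a ≤ b ↔ a + b = b`)
in which every finite system of polynomial inequalities `pᵢ ≤ xᵢ` has a least
solution. -/
class ChomskyAlgebra (C : Type) extends IdemSemiring C where
  algClosed : ∀ {n : ℕ} (p : Fin n → (Fin n → C) → C), (∀ i, IsPolyFun (p i)) →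
    ∃ sol : Fin n → C, (∀ i, p i sol ≤ sol i) ∧
      ∀ τ : Fin n → C, (∀ i, p i τ ≤ τ i) → ∀ i, sol i ≤ τ i

/-- `IsInterp eval` says that `eval` is the family of interpretations of
μ-expressions over the Chomsky algebra `C`, one for each valuation `v : X → C`:
each `eval v` is a homomorphism with respect to the semiring operations, and
`eval v (μx.t)` is the least `a` with `eval v[x↦a] t ≤ a`. -/
structure IsInterp {X C : Type} [DecidableEq X] [Infinite X] [ChomskyAlgebra C]
    (eval : (X → C) → MuTerm X → C) : Prop where
  var : ∀ (v : X → C) (x : X), eval v (.var x) = v x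
  zero : ∀ v, eval v .zero = 0
  one : ∀ v, eval v .one = 1
  add : ∀ v s t, eval v (.add s t) = eval v s + eval v t
  mul : ∀ v s t, eval v (.mul s t) = eval v s * eval v t
  mu : ∀ (v : X → C) (x : X) (t : MuTerm X),
    IsLeast {a : C | eval (Function.update v x a) t ≤ a} (eval v (.mu x t))

/-- A Chomsky algebra `C` is μ-continuous if for every interpretation `σ` over
`C`, all `c, d ∈ C`, and every term `t`,
`c·σ(μx.t)·d = sup_{n ≥ 0} c·σ(nx.t)·d` (in particular the supremum exists). -/
def MuContinuous (C : Type) [ChomskyAlgebra C] : Prop :=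
  ∀ (X : Type) [DecidableEq X] [Infinite X] (eval : (X → C) → MuTerm X → C),
    IsInterp eval → ∀ (v : X → C) (c d : C) (x : X) (t : MuTerm X),
      IsLUB (Set.range fun n : ℕ => c * eval v (MuTerm.napprox n x t) * d)
        (c * eval v (.mu x t) * d)

/-- A language interpretation `τ : T X → P(Y*)`: a homomorphism for the
semiring operations on languages with `τ(μx.t) = ⋃ n, τ(nx.t)`. -/
structure IsLangInterp {X Y : Type} [DecidableEq X] [Infinite X]
    (τ : MuTerm X → Language Y) : Prop where
  zero : τ .zero = 0
  one : τ .one = 1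
  add : ∀ s t, τ (.add s t) = τ s + τ t
  mul : ∀ s t, τ (.mul s t) = τ s * τ t
  mu : ∀ (x : X) (t : MuTerm X), τ (.mu x t) = ⨆ n : ℕ, τ (MuTerm.napprox n x t)

/-- The canonical interpretation `L_X : T X → P(X*)`: the language
interpretation with `L_X(x) = {x}`. -/
def IsCanonicalInterp {X : Type} [DecidableEq X] [Infinite X]
    (L : MuTerm X → Language X) : Prop :=
  IsLangInterp L ∧ ∀ x : X, L (.var x) = {[x]}

/-- For a word `w = x₁⋯x_k ∈ X*` and `σ : X → K`, `wordProd σ w` is the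
product `σ(x₁)⋯σ(x_k)` in `K`, with the empty word mapped to `1`. -/
def wordProd {X K : Type} [Monoid K] (σ : X → K) (w : List X) : K :=
  (w.map σ).prod

/-- `IsLangEval E` says that `E` is the family of structurally induced language
interpretations, one for each assignment `σ : X → P(Y*)` of languages to
variables: each `E σ` is a homomorphism for the semiring operations on
languages, with `E σ (μx.t) = ⋃ n, E σ (nx.t)`. -/
structure IsLangEval {X Y : Type} [DecidableEq X] [Infinite X]
    (E : (X → Language Y) → MuTerm X → Language Y) : Prop where
  var : ∀ (σ : X → Language Y) (x : X), E σ (.var x) = σ x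
  zero : ∀ σ, E σ .zero = 0
  one : ∀ σ, E σ .one = 1
  add : ∀ σ s t, E σ (.add s t) = E σ s + E σ t
  mul : ∀ σ s t, E σ (.mul s t) = E σ s * E σ t
  mu : ∀ (σ : X → Language Y) (x : X) (t : MuTerm X),
    E σ (.mu x t) = ⨆ n : ℕ, E σ (MuTerm.napprox n x t)

/-! By μ-continuity (with `c = d = 1`) a μ-term denotes the least upper bound of its
approximants, so it suffices that both sides have the same approximants. As `x` is not free
in `a`, writing `A = σ(a)`, the approximants of `μx.(1 + a·x)` satisfy `Pₙ₊₁ = 1 + A·Pₙ` and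
those of `μx.(1 + x·a)` satisfy `Qₙ₊₁ = 1 + Qₙ·A`; both are the geometric sum
`1 + A + ⋯ + Aⁿ⁻¹`. -/

open Finset Function

theorem geom_sum_succ_right {R : Type*} [Semiring R] (x : R) (n : ℕ) :
    ∑ i ∈ range (n + 1), x ^ i = (∑ i ∈ range n, x ^ i) * x + 1 := by
  rw [sum_range_succ', sum_mul]
  simp only [pow_succ, pow_zero]

namespace MuTerm

variable {X : Type} [DecidableEq X]

theorem fv_subset_vars : ∀ t : MuTerm X, t.fv ⊆ t.vars
  | var _ | zero | one => by simp [fv, vars]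
  | add s t | mul s t => union_subset_union (fv_subset_vars s) (fv_subset_vars t)
  | mu _ t => sdiff_subset.trans ((fv_subset_vars t).trans (subset_insert _ _))

end MuTerm

namespace IsInterp

open MuTerm

variable {X C : Type} [DecidableEq X] [Infinite X] [ChomskyAlgebra C]
  {eval : (X → C) → MuTerm X → C}

theorem eval_mu_congr (h : IsInterp eval) {v v' : X → C} {x y : X} {t t' : MuTerm X}
    (heq : ∀ a, eval (update v x a) t = eval (update v' y a) t') :
    eval v (.mu x t) = eval v' (.mu y t') :=
  (h.mu v x t).unique (by simpa only [heq] using h.mu v' y t')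

theorem eval_congr (h : IsInterp eval) :
    ∀ (t : MuTerm X) {v v' : X → C}, (∀ y ∈ t.fv, v y = v' y) → eval v t = eval v' t
  | .var x, _, _, hv => by rw [h.var, h.var]; exact hv x (by simp [fv])
  | .zero, _, _, _ => by rw [h.zero, h.zero]
  | .one, _, _, _ => by rw [h.one, h.one]
  | .add s t, _, _, hv => by
      simp only [fv, mem_union] at hv
      rw [h.add, h.add, h.eval_congr s fun y hy => hv y (.inl hy),
        h.eval_congr t fun y hy => hv y (.inr hy)]
  | .mul s t, _, _, hv => by
      simp only [fv, mem_union] at hv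
      rw [h.mul, h.mul, h.eval_congr s fun y hy => hv y (.inl hy),
        h.eval_congr t fun y hy => hv y (.inr hy)]
  | .mu x t, _, _, hv => h.eval_mu_congr fun a => h.eval_congr t fun y hy => by
      by_cases hyx : y = x
      · simp [hyx]
      · simp only [update_of_ne hyx]
        exact hv y (by simp [fv, hy, hyx])

theorem eval_update_of_notMem_fv (h : IsInterp eval) {t : MuTerm X} {x : X} (hx : x ∉ t.fv)
    (v : X → C) (c : C) : eval (update v x c) t = eval v t :=
  h.eval_congr t fun _ hy => update_of_ne (ne_of_mem_of_not_mem hy hx) _ _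

theorem eval_rename (h : IsInterp eval) (y z : X) :
    ∀ (t : MuTerm X), z ∉ t.vars → ∀ v : X → C,
      eval v (t.rename y z) = eval (update v y (v z)) t
  | .var w, _, _ => by
      by_cases hw : w = y <;> simp [rename, hw, h.var]
  | .zero, _, _ => by rw [rename, h.zero, h.zero]
  | .one, _, _ => by rw [rename, h.one, h.one]
  | .add s t, hz, _ => by
      simp only [vars, mem_union, not_or] at hz
      rw [rename, h.add, h.add, h.eval_rename y z s hz.1, h.eval_rename y z t hz.2]
  | .mul s t, hz, _ => by
      simp only [vars, mem_union, not_or] at hz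
      rw [rename, h.mul, h.mul, h.eval_rename y z s hz.1, h.eval_rename y z t hz.2]
  | .mu w t, hz, _ => by
      simp only [vars, mem_insert, not_or] at hz
      rw [rename]
      split_ifs with hw
      · subst hw
        exact h.eval_mu_congr fun a => by rw [update_idem]
      · refine h.eval_mu_congr fun a => ?_
        rw [h.eval_rename y z t hz.2, update_of_ne hz.1, update_comm hw]

theorem eval_subst (h : IsInterp eval) (x : X) (u : MuTerm X) (t : MuTerm X) (v : X → C) :
    eval v (subst x u t) = eval (update v x (eval v u)) t := by
  induction t using MuTerm.subst.induct x u generalizing v with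
  | case1 => simp [subst, h.var]
  | case2 w hw => simp [subst, hw, h.var]
  | case3 => simp [subst, h.zero]
  | case4 => simp [subst, h.one]
  | case5 s t ihs iht => rw [subst, h.add, h.add, ihs, iht]
  | case6 s t ihs iht => rw [subst, h.mul, h.mul, ihs, iht]
  | case7 t =>
      rw [subst, if_pos rfl]
      exact h.eval_mu_congr fun a => by rw [update_idem]
  | case8 w t hw z ih =>
      have hz : z ∉ t.vars ∪ u.fv ∪ {x} :=
        Classical.choose_spec (Infinite.exists_notMem_finset (t.vars ∪ u.fv ∪ {x}))
      rw [subst, if_neg hw]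
      change eval v (.mu z (subst x u (rename w z t))) = _
      clear_value z
      simp only [mem_union, mem_singleton, not_or] at hz
      obtain ⟨⟨hzt, hzu⟩, hzx⟩ := hz
      refine h.eval_mu_congr fun c => ?_
      rw [ih, h.eval_update_of_notMem_fv hzu, h.eval_rename w z t hzt, update_of_ne hzx,
        update_self]
      refine h.eval_congr t fun p hp => ?_
      have hpz : p ≠ z := ne_of_mem_of_not_mem (t.fv_subset_vars hp) hzt
      simp only [update_apply, hpz, if_false]

theorem eval_napprox_succ (h : IsInterp eval) (v : X → C) (n : ℕ) (x : X) (t : MuTerm X) :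
    eval v (napprox (n + 1) x t) = eval (update v x (eval v (napprox n x t))) t :=
  h.eval_subst x _ t v

theorem eval_napprox_one_add_mul_var (h : IsInterp eval) (v : X → C) {a : MuTerm X} {x : X}
    (hx : x ∉ a.fv) (n : ℕ) :
    eval v (napprox n x (.add .one (.mul a (.var x)))) = ∑ k ∈ range n, eval v a ^ k := by
  induction n with
  | zero => simp [napprox, h.zero]
  | succ n ih =>
      rw [h.eval_napprox_succ, h.add, h.one, h.mul, h.var, update_self,
        h.eval_update_of_notMem_fv hx, ih, geom_sum_succ, add_comm]

theorem eval_napprox_one_add_var_mul (h : IsInterp eval) (v : X → C) {a : MuTerm X} {x : X}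
    (hx : x ∉ a.fv) (n : ℕ) :
    eval v (napprox n x (.add .one (.mul (.var x) a))) = ∑ k ∈ range n, eval v a ^ k := by
  induction n with
  | zero => simp [napprox, h.zero]
  | succ n ih =>
      rw [h.eval_napprox_succ, h.add, h.one, h.mul, h.var, update_self,
        h.eval_update_of_notMem_fv hx, ih, geom_sum_succ_right, add_comm]

end IsInterp

theorem MuContinuous.eval_mu_eq_of_eval_napprox_eq {X C : Type} [DecidableEq X] [Infinite X]
    [ChomskyAlgebra C] (hC : MuContinuous C) {eval : (X → C) → MuTerm X → C}
    (h : IsInterp eval) (v : X → C) {x y : X} {t t' : MuTerm X}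
    (happrox : ∀ n, eval v (MuTerm.napprox n x t) = eval v (MuTerm.napprox n y t')) :
    eval v (.mu x t) = eval v (.mu y t') := by
  have hlub := hC X eval h v 1 1 x t
  have hlub' := hC X eval h v 1 1 y t'
  simp only [one_mul, mul_one, happrox] at hlub hlub'
  exact hlub.unique hlub'

/-- `μx.(1 + a·x) = μx.(1 + x·a)` holds in all μ-continuous
Chomsky algebras, provided `x` is not free in `a`. -/
theorem statement11 {X C : Type} [DecidableEq X] [Infinite X] [ChomskyAlgebra C]
    (hC : MuContinuous C) (eval : (X → C) → MuTerm X → C) (h : IsInterp eval)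
    (v : X → C) (a : MuTerm X) (x : X) (hx : x ∉ MuTerm.fv a) :
    eval v (.mu x (.add .one (.mul a (.var x)))) =
      eval v (.mu x (.add .one (.mul (.var x) a))) :=
  hC.eval_mu_eq_of_eval_napprox_eq h v fun n =>
    (h.eval_napprox_one_add_mul_var v hx n).trans (h.eval_napprox_one_add_var_mul v hx n).symm
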